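/- arXiv:1404.3405 — 10 statements merged into one kernel-verified Lean document; each statement's English description precedes it below -/
import Mathlib

section
/- Let A be a complex Banach algebra with a character φ, and suppose A is φ-amenable. Let J be a closed left ideal of A (a closed linear subspace with a·j ∈ J for all a ∈ A and j ∈ J) such that the restriction φ|_J is not identically zero. Then J, regarded as a complex Banach algebra with the product inherited from A, is φ|_J-amenable; that is, there exists m ∈ J** with m(φ|_J) = 1 and j·m = φ(j)·m for all j ∈ J. -/
/-- A (possibly non-unital) complex Banach algebra `A` with a character `φ` is
`φ`-amenable if there is `m ∈ A**` with `m(φ) = 1` and `a·m = φ(a)·m` for all `a ∈ A`,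
where `(a·m)(f) = m(f·a)` and `(f·a)(b) = f(ab)`. -/
def PhiAmenable (A : Type*) [NonUnitalNormedRing A] [NormedSpace ℂ A] [IsScalarTower ℂ A A]
    [SMulCommClass ℂ A A] (φ : A →L[ℂ] ℂ) : Prop :=
  ∃ m : (A →L[ℂ] ℂ) →L[ℂ] ℂ, m φ = 1 ∧
    ∀ (a : A) (f : A →L[ℂ] ℂ), m (f.comp (ContinuousLinearMap.mul ℂ A a)) = φ a * m f

/-!
If `m ∈ A**` is a `φ`-mean and `R : A → J` is the right multiplication `a ↦ a j₀` by an element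
`j₀ ∈ J` with `φ j₀ = 1`, then `g ↦ m (g ∘ R)` is a `φ|_J`-mean on `J`: `R` commutes with left
multiplication by elements of `J`, and `φ|_J ∘ R = φ`.
-/

namespace PhiAmenable

variable {A B : Type*} [NonUnitalNormedRing A] [NormedSpace ℂ A] [IsScalarTower ℂ A A]
  [SMulCommClass ℂ A A] [NonUnitalNormedRing B] [NormedSpace ℂ B] [IsScalarTower ℂ B B]
  [SMulCommClass ℂ B B]

theorem of_leftModuleMap {φ : A →L[ℂ] ℂ} (hA : PhiAmenable A φ) (θ : B →L[ℂ] A)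
    (R : A →L[ℂ] B) (hR : ∀ b a, R (θ b * a) = b * R a) (hφR : (φ.comp θ).comp R = φ) :
    PhiAmenable B (φ.comp θ) := by
  obtain ⟨m, hm_one, hm_mul⟩ := hA
  refine ⟨m.comp ((ContinuousLinearMap.compL ℂ A B ℂ).flip R), ?_, fun b g => ?_⟩
  · simpa [hφR] using hm_one
  · have hcomm : (g.comp (ContinuousLinearMap.mul ℂ B b)).comp R
        = (g.comp R).comp (ContinuousLinearMap.mul ℂ A (θ b)) := by
      ext a
      simp [hR]
    simpa [hcomm] using hm_mul (θ b) (g.comp R)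

end PhiAmenable

theorem exists_mem_map_eq_one {𝕜 M S F : Type*} [Field 𝕜] [AddCommMonoid M] [Module 𝕜 M]
    [SetLike S M] [SMulMemClass S 𝕜 M] [FunLike F M 𝕜] [LinearMapClass F 𝕜 M 𝕜] (f : F) {J : S} (hfJ : ∃ j ∈ J, f j ≠ 0) :
    ∃ j ∈ J, f j = 1 := by
  obtain ⟨j, hjJ, hj⟩ := hfJ
  exact ⟨(f j)⁻¹ • j, SMulMemClass.smul_mem _ hjJ, by simp [inv_mul_cancel₀ hj]⟩

theorem phiAmenable_of_closed_left_ideal_general (A : Type*) [NonUnitalNormedRing A]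
    [NormedSpace ℂ A] [IsScalarTower ℂ A A] [SMulCommClass ℂ A A]
    (φ : A →L[ℂ] ℂ) (hφmul : ∀ a b : A, φ (a * b) = φ a * φ b)
    (hA : PhiAmenable A φ)
    (J : NonUnitalSubalgebra ℂ A)
    (hJideal : ∀ a : A, ∀ j ∈ J, a * j ∈ J)
    (hφJ : ∃ j ∈ J, φ j ≠ 0) :
    @PhiAmenable ↥J _ (SubmoduleClass.toNormedSpace J) _ _ (φ.comp J.toSubmodule.subtypeL) := by
  let : NormedSpace ℂ J := SubmoduleClass.toNormedSpace J
  obtain ⟨j₀, hj₀J, hφj₀⟩ := exists_mem_map_eq_one φ hφJ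
  let R : A →L[ℂ] J := ((ContinuousLinearMap.mul ℂ A).flip j₀).codRestrict J.toSubmodule
    fun a => hJideal a j₀ hj₀J
  refine hA.of_leftModuleMap J.toSubmodule.subtypeL R (fun j a => ?_) ?_
  · exact Subtype.ext (mul_assoc (j : A) a j₀)
  · ext a
    change φ (a * j₀) = φ a
    rw [hφmul, hφj₀, mul_one]

/-- If `A` is a `φ`-amenable complex Banach algebra and `J` is a closed left ideal of `A`
on which `φ` does not vanish identically, then `J` (as a complex Banach algebra with the
inherited product) is `φ|_J`-amenable. -/
theorem phiAmenable_of_closed_left_ideal (A : Type*) [NonUnitalNormedRing A]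
    [NormedSpace ℂ A] [IsScalarTower ℂ A A] [SMulCommClass ℂ A A] [CompleteSpace A]
    (φ : A →L[ℂ] ℂ) (hφmul : ∀ a b : A, φ (a * b) = φ a * φ b) (hφne : φ ≠ 0)
    (hA : PhiAmenable A φ)
    (J : NonUnitalSubalgebra ℂ A) (hJclosed : IsClosed (J : Set A))
    (hJideal : ∀ a : A, ∀ j ∈ J, a * j ∈ J)
    (hφJ : ∃ j ∈ J, φ j ≠ 0) :
    @PhiAmenable ↥J _ (SubmoduleClass.toNormedSpace J) _ _ (φ.comp J.toSubmodule.subtypeL) :=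
  phiAmenable_of_closed_left_ideal_general A φ hφmul hA J hJideal hφJ
end

section
/- Let A be a complex Banach algebra with a character φ. Suppose there exists a closed left ideal J of A (a closed linear subspace with a·j ∈ J for all a ∈ A and j ∈ J) such that φ|_J is not identically zero and the Banach algebra J is φ|_J-amenable. Then A is φ-amenable. -/
noncomputable instance NonUnitalSubalgebra.complexNormedSpace {A : Type*} [NonUnitalNormedRing A]
    [NormedSpace ℂ A] (J : NonUnitalSubalgebra ℂ A) : NormedSpace ℂ J :=
  SubmoduleClass.toNormedSpace (R := ℂ) J


/-!
Pick `j ∈ J` with `φ j ≠ 0` and let `m_J` be a `φ|_J`-mean on `J`. Pulling `f ∈ A*` back to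
`J` along `x ↦ j x` (which lands in `J`, a left ideal) gives `f_j ∈ J*`, and
`m := (φ j)⁻¹ · m_J(f ↦ f_j)` is a `φ`-mean on `A`: left translation by `a` turns `f_j` into
`f_{aj}`, and `m_J(f_u) = φ(u) · m_J(f|_J)` for every `u ∈ J`; hence `m(f) = m_J(f|_J)` and
`m(f·a) = φ(aj) / φ(j) · m_J(f|_J) = φ(a) · m(f)`.
-/

namespace NonUnitalSubalgebra

variable {A : Type*} [NonUnitalNormedRing A] [NormedSpace ℂ A] [IsScalarTower ℂ A A]
  [SMulCommClass ℂ A A] (J : NonUnitalSubalgebra ℂ A)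

noncomputable def restrictLeftMul (j : A) : (A →L[ℂ] ℂ) →L[ℂ] (J →L[ℂ] ℂ) :=
  (ContinuousLinearMap.compL ℂ J A ℂ).flip
    ((ContinuousLinearMap.mul ℂ A j).comp J.toSubmodule.subtypeL)

@[simp]
theorem restrictLeftMul_apply (j : A) (f : A →L[ℂ] ℂ) (x : J) :
    J.restrictLeftMul j f x = f (j * x) :=
  rfl

theorem restrictLeftMul_comp_mul (a j : A) (f : A →L[ℂ] ℂ) :
    J.restrictLeftMul j (f.comp (ContinuousLinearMap.mul ℂ A a)) = J.restrictLeftMul (a * j) f := by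
  ext x
  simp [mul_assoc]

theorem restrictLeftMul_of_mem {j : A} (hj : j ∈ J) (f : A →L[ℂ] ℂ) :
    J.restrictLeftMul j f =
      (f.comp J.toSubmodule.subtypeL).comp (ContinuousLinearMap.mul ℂ J ⟨j, hj⟩) :=
  rfl

theorem apply_restrictLeftMul_of_mem {φ : A →L[ℂ] ℂ} {m : (J →L[ℂ] ℂ) →L[ℂ] ℂ}
    (hm : ∀ (u : J) (g : J →L[ℂ] ℂ),
      m (g.comp (ContinuousLinearMap.mul ℂ J u)) = φ.comp J.toSubmodule.subtypeL u * m g)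
    {j : A} (hj : j ∈ J) (f : A →L[ℂ] ℂ) :
    m (J.restrictLeftMul j f) = φ j * m (f.comp J.toSubmodule.subtypeL) := by
  rw [restrictLeftMul_of_mem J hj, hm]
  rfl

end NonUnitalSubalgebra

theorem phiAmenable_of_phiAmenable_closed_left_ideal_general (A : Type*) [NonUnitalNormedRing A]
    [NormedSpace ℂ A] [IsScalarTower ℂ A A] [SMulCommClass ℂ A A]
    (φ : A →L[ℂ] ℂ) (hφmul : ∀ a b : A, φ (a * b) = φ a * φ b)
    (J : NonUnitalSubalgebra ℂ A)
    (hJideal : ∀ a : A, ∀ j ∈ J, a * j ∈ J)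
    (hφJ : ∃ j ∈ J, φ j ≠ 0)
    (hJ : PhiAmenable ↥J (φ.comp J.toSubmodule.subtypeL)) :
    PhiAmenable A φ := by
  obtain ⟨j, hjJ, hφj⟩ := hφJ
  obtain ⟨mJ, hmJφ, hmJ⟩ := hJ
  refine ⟨(φ j)⁻¹ • mJ.comp (J.restrictLeftMul j), ?_, fun a f => ?_⟩
  · have : mJ (J.restrictLeftMul j φ) = φ j := by
      rw [J.apply_restrictLeftMul_of_mem hmJ hjJ, hmJφ, mul_one]
    simp [this, hφj]
  · have hmJ_transl : mJ (J.restrictLeftMul j (f.comp (ContinuousLinearMap.mul ℂ A a))) =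
        φ a * mJ (J.restrictLeftMul j f) := by
      rw [J.restrictLeftMul_comp_mul, J.apply_restrictLeftMul_of_mem hmJ (hJideal a j hjJ),
        J.apply_restrictLeftMul_of_mem hmJ hjJ, hφmul, mul_assoc]
    simp only [smul_apply, ContinuousLinearMap.comp_apply, hmJ_transl, smul_eq_mul]
    ring

/-- If a complex Banach algebra `A` with character `φ` has a closed left ideal `J`
on which `φ` does not vanish identically such that `J` is `φ|_J`-amenable, then `A`
is `φ`-amenable. -/
theorem phiAmenable_of_phiAmenable_closed_left_ideal (A : Type*) [NonUnitalNormedRing A]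
    [NormedSpace ℂ A] [IsScalarTower ℂ A A] [SMulCommClass ℂ A A] [CompleteSpace A]
    (φ : A →L[ℂ] ℂ) (hφmul : ∀ a b : A, φ (a * b) = φ a * φ b) (hφne : φ ≠ 0)
    (J : NonUnitalSubalgebra ℂ A) (hJclosed : IsClosed (J : Set A))
    (hJideal : ∀ a : A, ∀ j ∈ J, a * j ∈ J)
    (hφJ : ∃ j ∈ J, φ j ≠ 0)
    (hJ : PhiAmenable ↥J (φ.comp J.toSubmodule.subtypeL)) :
    PhiAmenable A φ :=
  phiAmenable_of_phiAmenable_closed_left_ideal_general A φ hφmul J hJideal hφJ hJ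
end

section
/- Let A be a complex Banach algebra with a character φ. Let A♯ = ℂ ⊕ A be the unitization of A, with product (λ, a)·(μ, b) = (λμ, λb + μa + ab) and norm ‖(λ, a)‖ = |λ| + ‖a‖, and let φ₁ : A♯ → ℂ be the character φ₁(λ, a) = λ + φ(a) (the unique character on A♯ extending φ). Then A is φ-amenable if and only if A♯ is φ₁-amenable. -/
set_option maxHeartbeats 1000000 in
/-- Let `A` be a complex Banach algebra with a character `φ`, and let `A♯ = ℂ ⊕ A` be its
unitization, with product `(λ, a)·(μ, b) = (λμ, λb + μa + ab)` (realized here on the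
topological vector space `ℂ × A` through the family `mulL x` of left-multiplication
operators) and with `φ₁(λ, a) = λ + φ(a)` the unique character of `A♯` extending `φ`
(realized by `ψ`).  Then `A` is `φ`-amenable if and only if `A♯` is `φ₁`-amenable. -/
theorem phiAmenable_iff_unitization_phiAmenable (A : Type*) [NonUnitalNormedRing A]
    [NormedSpace ℂ A] [IsScalarTower ℂ A A] [SMulCommClass ℂ A A] [CompleteSpace A]
    (φ : A →L[ℂ] ℂ) (hφmul : ∀ a b : A, φ (a * b) = φ a * φ b) (hφne : φ ≠ 0)
    (mulL : (ℂ × A) → (ℂ × A) →L[ℂ] (ℂ × A))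
    (hmulL : ∀ x y : ℂ × A, mulL x y = (x.1 * y.1, x.1 • y.2 + y.1 • x.2 + x.2 * y.2))
    (ψ : (ℂ × A) →L[ℂ] ℂ) (hψ : ∀ x : ℂ × A, ψ x = x.1 + φ x.2) :
    PhiAmenable A φ ↔
      ∃ m : ((ℂ × A) →L[ℂ] ℂ) →L[ℂ] ℂ, m ψ = 1 ∧
        ∀ (x : ℂ × A) (f : (ℂ × A) →L[ℂ] ℂ), m (f.comp (mulL x)) = ψ x * m f := by
  constructor
  · rintro ⟨m, hm1, hm2⟩
    -- restriction map : f ↦ f ∘ inr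
    set R : ((ℂ × A) →L[ℂ] ℂ) →L[ℂ] (A →L[ℂ] ℂ) :=
      (ContinuousLinearMap.compSL A (ℂ × A) ℂ (RingHom.id ℂ) (RingHom.id ℂ)).flip
        (ContinuousLinearMap.inr ℂ ℂ A) with hR
    have hRapp : ∀ (f : (ℂ × A) →L[ℂ] ℂ) (b : A), R f b = f (0, b) := by
      intro f b; simp [hR]
    refine ⟨m.comp R, ?_, ?_⟩
    · have hRψ : R ψ = φ := by
        refine ContinuousLinearMap.ext fun b => ?_
        simp [hRapp, hψ]
      simp only [ContinuousLinearMap.comp_apply]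
      rw [hRψ, hm1]
    · intro x f
      have key : R (f.comp (mulL x)) =
          x.1 • (R f) + (R f).comp (ContinuousLinearMap.mul ℂ A x.2) := by
        refine ContinuousLinearMap.ext fun b => ?_
        have h1 : ((0 : ℂ), x.1 • b + x.2 * b) = x.1 • ((0:ℂ), b) + ((0:ℂ), x.2 * b) := by
          simp
        simp only [hRapp, ContinuousLinearMap.comp_apply, ContinuousLinearMap.add_apply,
          ContinuousLinearMap.smul_apply, ContinuousLinearMap.mul_apply', hmulL]
        rw [show ((x.1 * 0 : ℂ), x.1 • b + (0:ℂ) • x.2 + x.2 * b)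
            = ((0:ℂ), x.1 • b + x.2 * b) by simp, h1, map_add, map_smul]
      calc m.comp R (f.comp (mulL x))
          = x.1 * m (R f) + m ((R f).comp (ContinuousLinearMap.mul ℂ A x.2)) := by
            simp only [ContinuousLinearMap.comp_apply]
            rw [key, map_add, map_smul, smul_eq_mul]
        _ = x.1 * m (R f) + φ x.2 * m (R f) := by rw [hm2]
        _ = ψ x * m.comp R f := by
            simp only [ContinuousLinearMap.comp_apply]
            rw [hψ]; ring
  · rintro ⟨M, hM1, hM2⟩
    obtain ⟨a, ha⟩ : ∃ a, φ a ≠ 0 := by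
      by_contra h
      push_neg at h
      exact hφne (ContinuousLinearMap.ext h)
    -- M vanishes on fst
    have hfst : M (ContinuousLinearMap.fst ℂ ℂ A) = 0 := by
      have h0 : (ContinuousLinearMap.fst ℂ ℂ A).comp (mulL (0, a)) = 0 := by
        refine ContinuousLinearMap.ext fun y => ?_
        simp [hmulL]
      have h := hM2 (0, a) (ContinuousLinearMap.fst ℂ ℂ A)
      rw [h0, map_zero, hψ] at h
      simp only [zero_add] at h
      exact (mul_eq_zero.1 h.symm).resolve_left ha
    -- extension map : g ↦ g ∘ snd
    set E : (A →L[ℂ] ℂ) →L[ℂ] ((ℂ × A) →L[ℂ] ℂ) :=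
      (ContinuousLinearMap.compSL (ℂ × A) A ℂ (RingHom.id ℂ) (RingHom.id ℂ)).flip
        (ContinuousLinearMap.snd ℂ ℂ A) with hE
    have hEapp : ∀ (g : A →L[ℂ] ℂ) (y : ℂ × A), E g y = g y.2 := by
      intro g y; simp [hE]
    refine ⟨M.comp E, ?_, ?_⟩
    · have hEφ : E φ = ψ - ContinuousLinearMap.fst ℂ ℂ A := by
        refine ContinuousLinearMap.ext fun y => ?_
        simp only [hEapp, ContinuousLinearMap.sub_apply, ContinuousLinearMap.coe_fst', hψ]
        ring
      simp only [ContinuousLinearMap.comp_apply]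
      rw [hEφ, map_sub, hM1, hfst, sub_zero]
    · intro b g
      have key : E (g.comp (ContinuousLinearMap.mul ℂ A b)) =
          (E g).comp (mulL (0, b)) - g b • ContinuousLinearMap.fst ℂ ℂ A := by
        refine ContinuousLinearMap.ext fun y => ?_
        simp only [hEapp, ContinuousLinearMap.comp_apply, ContinuousLinearMap.sub_apply,
          ContinuousLinearMap.smul_apply, ContinuousLinearMap.mul_apply', hmulL,
          ContinuousLinearMap.coe_fst', zero_smul, zero_add, smul_eq_mul]
        rw [map_add, map_smul, smul_eq_mul]
        ring
      calc M.comp E (g.comp (ContinuousLinearMap.mul ℂ A b))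
          = M ((E g).comp (mulL (0, b))) - g b * M (ContinuousLinearMap.fst ℂ ℂ A) := by
            simp only [ContinuousLinearMap.comp_apply]
            rw [key, map_sub, map_smul, smul_eq_mul]
        _ = ψ (0, b) * M (E g) - 0 := by rw [hM2, hfst, mul_zero]
        _ = φ b * M.comp E g := by
            simp only [ContinuousLinearMap.comp_apply]
            rw [hψ, sub_zero]; simp
end

section
/- Let A be a complex Banach algebra with a character φ. Suppose there is a net (m_i)_{i∈I} in A, indexed by a directed set I, with ‖m_i‖ ≤ 1 and φ(m_i) = 1 for all i, and ‖a m_i − φ(a) m_i‖ → 0 for every a ∈ A (such a net exists whenever A is a left amenable F-algebra and φ = ε). Let X and Y be Banach left A-modules, where the action of A on Y is given by a·y = φ(a) y. Let T : X → Y be a bounded linear left A-module morphism (T(a·x) = φ(a) T(x) for all a ∈ A, x ∈ X) that admits a bounded linear right inverse F : Y → X (T ∘ F = id_Y). Then the maps F_i : Y → X defined by F_i(y) = m_i·F(y) form a net of bounded linear right inverses of T with ‖F_i‖ ≤ ‖F‖ for all i, and for every a ∈ A the operator norm of the map y ↦ a·F_i(y) − φ(a)·F_i(y) tends to 0 along the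 net. -/
open Filter

/-- Let `A` be a complex Banach algebra with a character `φ`, and suppose there is a net
`(m_i)` in `A` with `‖m_i‖ ≤ 1`, `φ(m_i) = 1` and `‖a m_i − φ(a) m_i‖ → 0` for every `a`.
Let `X` be a Banach left `A`-module (with action `σ`), let `Y` be a Banach space with the
left `A`-action `a·y = φ(a) y`, and let `T : X → Y` be a bounded left `A`-module morphism
with a bounded linear right inverse `F`.  Then the maps `F_i(y) = m_i·F(y)` form a net of
bounded right inverses of `T` with `‖F_i‖ ≤ ‖F‖`, and `‖a·F_i − φ(a)·F_i‖ → 0` for every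
`a ∈ A` in the operator norm. -/
theorem rightInverse_net_of_leftAmenable (A : Type*) [NonUnitalNormedRing A]
    [NormedSpace ℂ A] [IsScalarTower ℂ A A] [SMulCommClass ℂ A A] [CompleteSpace A]
    (φ : A →L[ℂ] ℂ) (hφmul : ∀ a b : A, φ (a * b) = φ a * φ b) (hφne : φ ≠ 0)
    (I : Type*) [Nonempty I] [Preorder I] [IsDirected I (· ≤ ·)]
    (m : I → A) (hm_bdd : ∀ i, ‖m i‖ ≤ 1) (hm_one : ∀ i, φ (m i) = 1)
    (hm : ∀ a : A, Tendsto (fun i => ‖a * m i - φ a • m i‖) atTop (nhds 0))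
    (X : Type*) [NormedAddCommGroup X] [NormedSpace ℂ X] [CompleteSpace X]
    (σ : A →L[ℂ] X →L[ℂ] X) (hσ_act : ∀ a b : A, σ (a * b) = (σ a).comp (σ b))
    (hσ_norm : ∀ (a : A) (x : X), ‖σ a x‖ ≤ ‖a‖ * ‖x‖)
    (Y : Type*) [NormedAddCommGroup Y] [NormedSpace ℂ Y] [CompleteSpace Y]
    (T : X →L[ℂ] Y) (hT : ∀ (a : A) (x : X), T (σ a x) = φ a • T x)
    (F : Y →L[ℂ] X) (hF : T.comp F = ContinuousLinearMap.id ℂ Y) :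
    (∀ i, T.comp ((σ (m i)).comp F) = ContinuousLinearMap.id ℂ Y) ∧
    (∀ i, ‖(σ (m i)).comp F‖ ≤ ‖F‖) ∧
    (∀ a : A, Tendsto
      (fun i => ‖(σ a).comp ((σ (m i)).comp F) - φ a • ((σ (m i)).comp F)‖)
      atTop (nhds 0)) := by
  have hFid : ∀ y : Y, T (F y) = y := fun y => congrFun (congrArg DFunLike.coe hF) y
  refine ⟨?_, ?_, ?_⟩
  · intro i
    ext y
    simp [hT, hFid, hm_one]
  · intro i
    refine ContinuousLinearMap.opNorm_le_bound _ (norm_nonneg F) fun y => ?_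
    calc ‖σ (m i) (F y)‖ ≤ ‖m i‖ * ‖F y‖ := hσ_norm _ _
      _ ≤ 1 * ‖F y‖ := by
          exact mul_le_mul_of_nonneg_right (hm_bdd i) (norm_nonneg _)
      _ = ‖F y‖ := one_mul _
      _ ≤ ‖F‖ * ‖y‖ := F.le_opNorm y
  · intro a
    have key : ∀ i, (σ a).comp ((σ (m i)).comp F) - φ a • ((σ (m i)).comp F)
        = (σ (a * m i - φ a • m i)).comp F := by
      intro i
      ext y
      simp [hσ_act, map_sub, map_smul]
    have hb : ∀ i, ‖(σ a).comp ((σ (m i)).comp F) - φ a • ((σ (m i)).comp F)‖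
        ≤ ‖a * m i - φ a • m i‖ * ‖F‖ := by
      intro i
      rw [key i]
      refine ContinuousLinearMap.opNorm_le_bound _
        (mul_nonneg (norm_nonneg _) (norm_nonneg _)) fun y => ?_
      calc ‖σ (a * m i - φ a • m i) (F y)‖ ≤ ‖a * m i - φ a • m i‖ * ‖F y‖ := hσ_norm _ _
        _ ≤ ‖a * m i - φ a • m i‖ * (‖F‖ * ‖y‖) :=
            mul_le_mul_of_nonneg_left (F.le_opNorm y) (norm_nonneg _)
        _ = ‖a * m i - φ a • m i‖ * ‖F‖ * ‖y‖ := by ring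
    have h0 : Tendsto (fun i => ‖a * m i - φ a • m i‖ * ‖F‖) atTop (nhds 0) := by
      simpa using (hm a).mul_const ‖F‖
    exact squeeze_zero (fun i => norm_nonneg _) hb h0
end

section
/- Let A be a complex Banach algebra with a character φ. Suppose there is a net (m_i)_{i∈I} in A, indexed by a directed set I, with ‖m_i‖ ≤ 1 and φ(m_i) = 1 for all i, and ‖a m_i − φ(a) m_i‖ → 0 for every a ∈ A. Let X and Y be Banach right A-modules, where the action of A on Y is given by y·a = φ(a) y. For u ∈ X* and a ∈ A define a·u ∈ X* by (a·u)(x) = u(x·a), and similarly on Y*. Let T : X* → Y* be a bounded linear map which is continuous with respect to the weak* topologies of X* and Y*, is a left A-module morphism (T(a·u) = a·T(u) for all a ∈ A, u ∈ X*), and admits a bounded linear right inverse F : Y* → X*. Then there exists a bounded linear right inverse Θ : Y* → X* of T which is a left A-module morphism, i.e. Θ(v)(x·a) = φ(a)·Θ(v)(x) for all a ∈ A, v ∈ Y*, x ∈ X. -/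
/-!
Average `F` against the net: `Θ v x = lim_𝒰 F v (x·mᵢ)` along an ultrafilter `𝒰 ≥ atTop`; the
limit exists because the values stay in the compact disc of radius `‖F‖‖v‖‖x‖`. Since
`x ↦ F v (x·mᵢ)` is `mᵢ·F v`, `T` sends it to `φ(mᵢ) v = v`, and weak* continuity passes this to
the limit: `T (Θ v) = v`. Finally `Θ v (x·a) - φ(a) Θ v x` is the limit of
`F v (x·(a mᵢ - φ(a) mᵢ))`, which tends to `0`.
-/

open Filter Topology

theorem Ultrafilter.exists_tendsto_of_norm_le {ι E : Type*} [SeminormedAddCommGroup E]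
    [ProperSpace E] (U : Ultrafilter ι) {f : ι → E} {C : ℝ} (hf : ∀ i, ‖f i‖ ≤ C) :
    ∃ c, Tendsto f U (𝓝 c) := by
  obtain ⟨c, -, hc⟩ := (isCompact_closedBall (0 : E) C).ultrafilter_le_nhds (U.map f) <| by
    rw [Ultrafilter.coe_map, le_principal_iff]
    exact mem_map.mpr (univ_mem' fun i => mem_closedBall_zero_iff.mpr (hf i))
  exact ⟨c, hc⟩

namespace ContinuousLinearMap

variable {ι 𝕜 V E G : Type*} [NontriviallyNormedField 𝕜]
  [NormedAddCommGroup V] [NormedSpace 𝕜 V] [NormedAddCommGroup E] [NormedSpace 𝕜 E]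
  [NormedAddCommGroup G] [NormedSpace 𝕜 G] [ProperSpace G]

theorem exists_tendsto_ultrafilter_apply₂ (U : Ultrafilter ι) (S : ι → V →L[𝕜] E →L[𝕜] G)
    {C : ℝ} (hS : ∀ i v x, ‖S i v x‖ ≤ C * ‖v‖ * ‖x‖) :
    ∃ Θ : V →L[𝕜] E →L[𝕜] G, ∀ v x, Tendsto (fun i => S i v x) U (𝓝 (Θ v x)) := by
  let g : V → E → G := fun v x => limUnder (U : Filter ι) fun i => S i v x
  have hg v x : Tendsto (fun i => S i v x) U (𝓝 (g v x)) :=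
    tendsto_nhds_limUnder (U.exists_tendsto_of_norm_le (hS · v x))
  refine ⟨LinearMap.mkContinuous₂ (LinearMap.mk₂ 𝕜 g ?_ ?_ ?_ ?_) C ?_, hg⟩
  · intro v w x
    exact tendsto_nhds_unique (hg (v + w) x) (by simpa using (hg v x).add (hg w x))
  · intro c v x
    exact tendsto_nhds_unique (hg (c • v) x) (by simpa using (hg v x).const_smul c)
  · intro v x y
    exact tendsto_nhds_unique (hg v (x + y)) (by simpa using (hg v x).add (hg v y))
  · intro c v x
    exact tendsto_nhds_unique (hg v (c • x)) (by simpa using (hg v x).const_smul c)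
  · intro v x
    exact le_of_tendsto (hg v x).norm (.of_forall (hS · v x))

end ContinuousLinearMap

theorem tendsto_apply_of_continuous_weakDual {ι 𝕜 X Y : Type*} [NontriviallyNormedField 𝕜]
    [NormedAddCommGroup X] [NormedSpace 𝕜 X] [NormedAddCommGroup Y] [NormedSpace 𝕜 Y]
    {T : StrongDual 𝕜 X → StrongDual 𝕜 Y}
    (hT : Continuous fun u : WeakDual 𝕜 X => StrongDual.toWeakDual (T u))
    {l : Filter ι} {f : ι → StrongDual 𝕜 X} {w : StrongDual 𝕜 X}
    (hf : ∀ x, Tendsto (fun i => f i x) l (𝓝 (w x))) (y : Y) :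
    Tendsto (fun i => T (f i) y) l (𝓝 (T w y)) := by
  have hfw : Tendsto (fun i => StrongDual.toWeakDual (f i)) l (𝓝 (StrongDual.toWeakDual w)) :=
    tendsto_iff_forall_eval_tendsto_topDualPairing.mpr hf
  exact tendsto_iff_forall_eval_tendsto_topDualPairing.mp ((hT.tendsto _).comp hfw) y

theorem tendsto_apply_act_sub_smul_apply_act {𝕜 A X ι : Type*} [NontriviallyNormedField 𝕜]
    [NonUnitalNormedRing A] [NormedSpace 𝕜 A] [NormedAddCommGroup X] [NormedSpace 𝕜 X]
    [Preorder ι] {σ : A →L[𝕜] X →L[𝕜] X} (hσ_act : ∀ a b : A, σ (a * b) = (σ b).comp (σ a))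
    (hσ_norm : ∀ (a : A) (x : X), ‖σ a x‖ ≤ ‖x‖ * ‖a‖) (φ : A →L[𝕜] 𝕜) {m : ι → A}
    (hm : ∀ a : A, Tendsto (fun i => ‖a * m i - φ a • m i‖) atTop (𝓝 0))
    (u : X →L[𝕜] 𝕜) (a : A) (x : X) :
    Tendsto (fun i => u (σ (m i) (σ a x)) - φ a * u (σ (m i) x)) atTop (𝓝 0) := by
  have hsub i : u (σ (m i) (σ a x)) - φ a * u (σ (m i) x) = u (σ (a * m i - φ a • m i) x) := by
    simp [hσ_act]
  refine squeeze_zero_norm (a := fun i => ‖u‖ * ‖x‖ * ‖a * m i - φ a • m i‖) (fun i => ?_) ?_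
  · rw [hsub, mul_assoc]
    exact u.le_opNorm_of_le (hσ_norm _ _)
  · simpa using (hm a).const_mul (‖u‖ * ‖x‖)

theorem exists_module_morphism_right_inverse_general (A : Type*) [NonUnitalNormedRing A]
    [NormedSpace ℂ A] (φ : A →L[ℂ] ℂ)
    (I : Type*) [Nonempty I] [Preorder I] [IsDirected I (· ≤ ·)]
    (m : I → A) (hm_bdd : ∀ i, ‖m i‖ ≤ 1) (hm_one : ∀ i, φ (m i) = 1)
    (hm : ∀ a : A, Tendsto (fun i => ‖a * m i - φ a • m i‖) atTop (nhds 0))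
    (X : Type*) [NormedAddCommGroup X] [NormedSpace ℂ X]
    (σ : A →L[ℂ] X →L[ℂ] X) (hσ_act : ∀ a b : A, σ (a * b) = (σ b).comp (σ a))
    (hσ_norm : ∀ (a : A) (x : X), ‖σ a x‖ ≤ ‖x‖ * ‖a‖)
    (Y : Type*) [NormedAddCommGroup Y] [NormedSpace ℂ Y]
    (T : (X →L[ℂ] ℂ) →L[ℂ] (Y →L[ℂ] ℂ))
    (hT_wk : Continuous (fun u : WeakDual ℂ X => (T u : WeakDual ℂ Y)))
    (hT_mod : ∀ (a : A) (u : X →L[ℂ] ℂ), T (u.comp (σ a)) = φ a • T u)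
    (F : (Y →L[ℂ] ℂ) →L[ℂ] (X →L[ℂ] ℂ))
    (hF : T.comp F = ContinuousLinearMap.id ℂ (Y →L[ℂ] ℂ)) :
    ∃ Θ : (Y →L[ℂ] ℂ) →L[ℂ] (X →L[ℂ] ℂ),
      T.comp Θ = ContinuousLinearMap.id ℂ (Y →L[ℂ] ℂ) ∧
      ∀ (a : A) (v : Y →L[ℂ] ℂ) (x : X), Θ v (σ a x) = φ a * Θ v x := by
  obtain ⟨U, hU⟩ : ∃ U : Ultrafilter I, ↑U ≤ (atTop : Filter I) := ⟨.of atTop, Ultrafilter.of_le _⟩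
  have hσm i x : ‖σ (m i) x‖ ≤ ‖x‖ :=
    (hσ_norm _ _).trans (mul_le_of_le_one_right (norm_nonneg x) (hm_bdd i))
  let S : I → (Y →L[ℂ] ℂ) →L[ℂ] X →L[ℂ] ℂ :=
    fun i => (ContinuousLinearMap.precomp ℂ (σ (m i))).comp F
  obtain ⟨Θ, hΘ⟩ := ContinuousLinearMap.exists_tendsto_ultrafilter_apply₂ U S (C := ‖F‖)
    fun i v x => ((F v).le_opNorm_of_le (hσm i x)).trans
      (mul_le_mul_of_nonneg_right (F.le_opNorm v) (norm_nonneg x))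
  refine ⟨Θ, ?_, fun a v x => ?_⟩
  · have hTS i v : T (S i v) = v := calc
      T (S i v) = φ (m i) • T (F v) := hT_mod (m i) (F v)
      _ = v := by rw [hm_one, one_smul, ← T.comp_apply, hF, ContinuousLinearMap.id_apply]
    ext v y
    exact tendsto_nhds_unique (tendsto_apply_of_continuous_weakDual
      (NormedSpace.Dual.toWeakDual_continuous.comp hT_wk) (hΘ v) y) (by simp [hTS])
  · exact tendsto_nhds_unique (hΘ v (σ a x)) (by
      simpa [S] using ((hΘ v x).const_mul (φ a)).add
        ((tendsto_apply_act_sub_smul_apply_act hσ_act hσ_norm φ hm (F v) a x).mono_left hU))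

/-- Let `A` be a complex Banach algebra with a character `φ` admitting a net `(m_i)` with
`‖m_i‖ ≤ 1`, `φ(m_i) = 1` and `‖a m_i − φ(a) m_i‖ → 0` for all `a ∈ A`.  Let `X` be a
Banach right `A`-module (with action `σ`, where `σ a x` denotes `x·a`) and `Y` a Banach
space with the right `A`-action `y·a = φ(a) y`.  If `T : X* → Y*` is a bounded linear map,
continuous for the weak* topologies, a left `A`-module morphism, and admitting a bounded
linear right inverse, then `T` admits a bounded linear right inverse `Θ` which is a left
`A`-module morphism, i.e. `Θ(v)(x·a) = φ(a)·Θ(v)(x)`. -/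
theorem exists_module_morphism_right_inverse (A : Type*) [NonUnitalNormedRing A]
    [NormedSpace ℂ A] [IsScalarTower ℂ A A] [SMulCommClass ℂ A A] [CompleteSpace A]
    (φ : A →L[ℂ] ℂ) (hφmul : ∀ a b : A, φ (a * b) = φ a * φ b) (hφne : φ ≠ 0)
    (I : Type*) [Nonempty I] [Preorder I] [IsDirected I (· ≤ ·)]
    (m : I → A) (hm_bdd : ∀ i, ‖m i‖ ≤ 1) (hm_one : ∀ i, φ (m i) = 1)
    (hm : ∀ a : A, Tendsto (fun i => ‖a * m i - φ a • m i‖) atTop (nhds 0))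
    (X : Type*) [NormedAddCommGroup X] [NormedSpace ℂ X] [CompleteSpace X]
    (σ : A →L[ℂ] X →L[ℂ] X) (hσ_act : ∀ a b : A, σ (a * b) = (σ b).comp (σ a))
    (hσ_norm : ∀ (a : A) (x : X), ‖σ a x‖ ≤ ‖x‖ * ‖a‖)
    (Y : Type*) [NormedAddCommGroup Y] [NormedSpace ℂ Y] [CompleteSpace Y]
    (T : (X →L[ℂ] ℂ) →L[ℂ] (Y →L[ℂ] ℂ))
    (hT_wk : Continuous (fun u : WeakDual ℂ X => (T u : WeakDual ℂ Y)))
    (hT_mod : ∀ (a : A) (u : X →L[ℂ] ℂ), T (u.comp (σ a)) = φ a • T u)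
    (F : (Y →L[ℂ] ℂ) →L[ℂ] (X →L[ℂ] ℂ))
    (hF : T.comp F = ContinuousLinearMap.id ℂ (Y →L[ℂ] ℂ)) :
    ∃ Θ : (Y →L[ℂ] ℂ) →L[ℂ] (X →L[ℂ] ℂ),
      T.comp Θ = ContinuousLinearMap.id ℂ (Y →L[ℂ] ℂ) ∧
      ∀ (a : A) (v : Y →L[ℂ] ℂ) (x : X), Θ v (σ a x) = φ a * Θ v x :=
  exists_module_morphism_right_inverse_general A φ I m hm_bdd hm_one hm X σ hσ_act hσ_norm Y T hT_wk
    hT_mod F hF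
end

section
/- Let A be a complex Banach algebra with a character φ. Suppose there is a net (m_i)_{i∈I} in A, indexed by a directed set I, with ‖m_i‖ ≤ 1 and φ(m_i) = 1 for all i, and ‖a m_i − φ(a) m_i‖ → 0 for every a ∈ A (such a net exists whenever A is a left amenable F-algebra and φ = ε). Let X be a Banach right A-module and Y a closed linear subspace of X with y·a ∈ Y for all y ∈ Y and a ∈ A. If f : Y → ℂ is a bounded linear functional satisfying f(y·a) = φ(a) f(y) for all a ∈ A and y ∈ Y, then f extends to a bounded linear functional F : X → ℂ satisfying F(x·a) = φ(a) F(x) for all a ∈ A and x ∈ X. -/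
open Filter

/-- Let `A` be a complex Banach algebra with a character `φ` admitting a net `(m_i)` with
`‖m_i‖ ≤ 1`, `φ(m_i) = 1` and `‖a m_i − φ(a) m_i‖ → 0` for all `a ∈ A` (such a net exists
whenever `A` is a left amenable F-algebra and `φ = ε`).  Let `X` be a Banach right
`A`-module (action `σ`, with `σ a x = x·a`) and `Y` a closed `A`-invariant subspace of
`X`.  If `f` is a bounded linear functional on `Y` with `f(y·a) = φ(a) f(y)`, then `f`
extends to a bounded linear functional `F` on `X` with `F(x·a) = φ(a) F(x)`. -/
theorem extension_of_invariant_functional (A : Type*) [NonUnitalNormedRing A]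
    [NormedSpace ℂ A] [IsScalarTower ℂ A A] [SMulCommClass ℂ A A] [CompleteSpace A]
    (φ : A →L[ℂ] ℂ) (hφmul : ∀ a b : A, φ (a * b) = φ a * φ b) (hφne : φ ≠ 0)
    (I : Type*) [Nonempty I] [Preorder I] [IsDirected I (· ≤ ·)]
    (m : I → A) (hm_bdd : ∀ i, ‖m i‖ ≤ 1) (hm_one : ∀ i, φ (m i) = 1)
    (hm : ∀ a : A, Tendsto (fun i => ‖a * m i - φ a • m i‖) atTop (nhds 0))
    (X : Type*) [NormedAddCommGroup X] [NormedSpace ℂ X] [CompleteSpace X]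
    (σ : A →L[ℂ] X →L[ℂ] X) (hσ_act : ∀ a b : A, σ (a * b) = (σ b).comp (σ a))
    (hσ_norm : ∀ (a : A) (x : X), ‖σ a x‖ ≤ ‖x‖ * ‖a‖)
    (Y : Submodule ℂ X) (hYclosed : IsClosed (Y : Set X))
    (hYinv : ∀ (a : A) (y : X), y ∈ Y → σ a y ∈ Y)
    (f : ↥Y →L[ℂ] ℂ)
    (hf : ∀ (a : A) (y : ↥Y), f ⟨σ a ↑y, hYinv a ↑y y.2⟩ = φ a * f y) :
    ∃ F : X →L[ℂ] ℂ, (∀ y : ↥Y, F ↑y = f y) ∧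
      ∀ (a : A) (x : X), F (σ a x) = φ a * F x := by

  -- Hahn–Banach extension of `f` to all of `X`
  obtain ⟨G, hGext, hGnorm⟩ := exists_extension_norm_eq Y f
  have hU : (atTop : Filter I).NeBot := atTop_neBot_iff.mpr ⟨‹_›, ‹_›⟩
  set U : Ultrafilter I := Ultrafilter.of atTop with hUdef
  have hUle : (↑U : Filter I) ≤ atTop := Ultrafilter.of_le _
  set g : X → I → ℂ := fun x i => G (σ (m i) x) with hg
  have hσb : ∀ (i : I) (x : X), ‖σ (m i) x‖ ≤ ‖x‖ := by
    intro i x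
    refine (hσ_norm (m i) x).trans ?_
    calc ‖x‖ * ‖m i‖ ≤ ‖x‖ * 1 := by
          exact mul_le_mul_of_nonneg_left (hm_bdd i) (norm_nonneg x)
      _ = ‖x‖ := mul_one _
  have hbound : ∀ x i, ‖g x i‖ ≤ ‖G‖ * ‖x‖ := by
    intro x i
    calc ‖G (σ (m i) x)‖ ≤ ‖G‖ * ‖σ (m i) x‖ := G.le_opNorm _
      _ ≤ ‖G‖ * ‖x‖ := mul_le_mul_of_nonneg_left (hσb i x) (norm_nonneg G)
  have hlim : ∀ x : X, ∃ c : ℂ, Tendsto (g x) ↑U (nhds c) := by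
    intro x
    have hmem : ↑(U.map (g x)) ≤ Filter.principal (Metric.closedBall (0 : ℂ) (‖G‖ * ‖x‖)) := by
      rw [le_principal_iff]
      refine Filter.mem_map.mpr (Filter.Eventually.mono Filter.univ_mem ?_)
      intro i _
      simpa [Metric.mem_closedBall, dist_zero_right] using hbound x i
    obtain ⟨c, _, hc⟩ :=
      (isCompact_closedBall (0 : ℂ) (‖G‖ * ‖x‖)).ultrafilter_le_nhds (U.map (g x)) hmem
    exact ⟨c, hc⟩
  choose L hL using hlim
  have hadd : ∀ x y : X, L (x + y) = L x + L y := by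
    intro x y
    refine tendsto_nhds_unique (hL (x + y)) ?_
    have : Tendsto (fun i => g x i + g y i) ↑U (nhds (L x + L y)) := (hL x).add (hL y)
    refine this.congr fun i => ?_
    simp [hg, map_add]
  have hsmul : ∀ (c : ℂ) (x : X), L (c • x) = c * L x := by
    intro c x
    refine tendsto_nhds_unique (hL (c • x)) ?_
    have : Tendsto (fun i => c * g x i) ↑U (nhds (c * L x)) := (hL x).const_mul c
    refine this.congr fun i => ?_
    simp [hg, map_smul, smul_eq_mul]
  have hLbound : ∀ x : X, ‖L x‖ ≤ ‖G‖ * ‖x‖ := by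
    intro x
    exact le_of_tendsto (hL x).norm (Filter.Eventually.of_forall (hbound x))
  let Flin : X →ₗ[ℂ] ℂ :=
    { toFun := L
      map_add' := hadd
      map_smul' := fun c x => hsmul c x }
  refine ⟨Flin.mkContinuous ‖G‖ hLbound, ?_, ?_⟩
  · intro y
    have hconst : ∀ i, g (↑y) i = f y := by
      intro i
      have h1 : g (↑y) i = G ((⟨σ (m i) ↑y, hYinv (m i) ↑y y.2⟩ : Y) : X) := rfl
      rw [h1, hGext, hf (m i) y, hm_one i, one_mul]
    have : Tendsto (g (↑y)) ↑U (nhds (f y)) := by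
      refine tendsto_const_nhds.congr fun i => (hconst i).symm
    exact tendsto_nhds_unique (hL ↑y) this
  · intro a x
    have key : ∀ i, g (σ a x) i - φ a * g x i = G (σ (a * m i - φ a • m i) x) := by
      intro i
      have h1 : σ (m i) (σ a x) = σ (a * m i) x := by
        rw [hσ_act a (m i)]; rfl
      have h2 : φ a * G (σ (m i) x) = G (φ a • σ (m i) x) := by
        rw [map_smul, smul_eq_mul]
      simp only [hg, h1, h2, ← map_sub]
      congr 1
      rw [map_sub, map_smul]
      simp
    have hdiff : Tendsto (fun i => g (σ a x) i - φ a * g x i) ↑U (nhds 0) := by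
      refine squeeze_zero_norm
        (a := fun i : I => ‖G‖ * (‖x‖ * ‖a * m i - φ a • m i‖)) (fun i => ?_) ?_
      · rw [key i]
        calc ‖G (σ (a * m i - φ a • m i) x)‖
            ≤ ‖G‖ * ‖σ (a * m i - φ a • m i) x‖ := G.le_opNorm _
          _ ≤ ‖G‖ * (‖x‖ * ‖a * m i - φ a • m i‖) :=
              mul_le_mul_of_nonneg_left (hσ_norm _ x) (norm_nonneg G)
      · have h0 : Tendsto (fun i => ‖G‖ * (‖x‖ * ‖a * m i - φ a • m i‖)) atTop (nhds 0) := by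
          have := ((hm a).const_mul ‖x‖).const_mul ‖G‖
          simpa using this
        exact h0.mono_left hUle
    have hT : Tendsto (g (σ a x)) ↑U (nhds (φ a * L x)) := by
      have := hdiff.add ((hL x).const_mul (φ a))
      simpa using this
    exact tendsto_nhds_unique (hL (σ a x)) hT
end

section
/- Let A and B be complex Banach algebras, φ a character on A and ψ a character on B. Suppose P : A → B is a continuous algebra homomorphism with dense range such that ψ ∘ P = φ. If A is φ-amenable, then B is ψ-amenable. -/
/-- Let `A` and `B` be complex Banach algebras, `φ` a character on `A`, `ψ` a character on
`B`, and `P : A → B` a continuous algebra homomorphism with dense range such that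
`ψ ∘ P = φ`.  If `A` is `φ`-amenable, then `B` is `ψ`-amenable. -/
theorem phiAmenable_of_dense_range_hom (A : Type*) [NonUnitalNormedRing A]
    [NormedSpace ℂ A] [IsScalarTower ℂ A A] [SMulCommClass ℂ A A] [CompleteSpace A]
    (B : Type*) [NonUnitalNormedRing B]
    [NormedSpace ℂ B] [IsScalarTower ℂ B B] [SMulCommClass ℂ B B] [CompleteSpace B]
    (φ : A →L[ℂ] ℂ) (hφmul : ∀ a b : A, φ (a * b) = φ a * φ b) (hφne : φ ≠ 0)
    (ψ : B →L[ℂ] ℂ) (hψmul : ∀ a b : B, ψ (a * b) = ψ a * ψ b) (hψne : ψ ≠ 0)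
    (P : A →L[ℂ] B) (hPmul : ∀ a b : A, P (a * b) = P a * P b)
    (hPdense : DenseRange P) (hPψ : ∀ a : A, ψ (P a) = φ a)
    (hA : PhiAmenable A φ) :
    PhiAmenable B ψ := by
  obtain ⟨m, hm1, hm2⟩ := hA
  -- precomposition with P : (B →L ℂ) →L (A →L ℂ)
  set T : (B →L[ℂ] ℂ) →L[ℂ] (A →L[ℂ] ℂ) :=
    (ContinuousLinearMap.compL ℂ A B ℂ).flip P with hT
  have hTapp : ∀ f : B →L[ℂ] ℂ, T f = f.comp P := fun f => rfl
  refine ⟨m.comp T, ?_, ?_⟩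
  · have : T ψ = φ := by
      ext a
      simp [hTapp, hPψ a]
    simp [this, hm1]
  · intro b f
    -- both sides, as functions of b, are continuous and agree on range P
    let h1 : B →L[ℂ] ℂ :=
      (m.comp T).comp (((ContinuousLinearMap.compL ℂ B B ℂ) f).comp
        (ContinuousLinearMap.mul ℂ B))
    let h2 : B →L[ℂ] ℂ := (m (T f)) • ψ
    have key : ⇑h1 = ⇑h2 := by
      refine hPdense.equalizer h1.continuous h2.continuous ?_
      ext a
      have hcomp : (f.comp (ContinuousLinearMap.mul ℂ B (P a))).comp P
          = (f.comp P).comp (ContinuousLinearMap.mul ℂ A a) := by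
        ext x
        simp [← hPmul]
      have : h1 (P a) = m ((f.comp P).comp (ContinuousLinearMap.mul ℂ A a)) := by
        simp only [h1, ContinuousLinearMap.comp_apply, ContinuousLinearMap.compL_apply, hTapp]
        rw [hcomp]
      rw [Function.comp_apply, Function.comp_apply, this, hm2 a (f.comp P)]
      simp [h2, hPψ a, hTapp, mul_comm]
    have := congrFun key b
    simpa [h1, h2, hTapp, mul_comm] using this
end

section
/- Let S be a (discrete) semigroup and s₀ ∈ S. The subset S·s₀ = {s s₀ : s ∈ S} is a subsemigroup of S. Then S is left amenable if and only if S·s₀ is left amenable (with respect to means on ℓ∞(S·s₀) and left translations by elements of S·s₀). -/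
open scoped BoundedContinuousFunction

/-- A (discrete) semigroup `S` is left amenable if there is a left invariant mean on
`ℓ∞(S)`: a continuous linear functional `m` with `m(1) = 1`, `m(f) ≥ 0` for `f ≥ 0`, and
`m(ℓ_s f) = m(f)` for all `s ∈ S`, where `(ℓ_s f)(t) = f(st)`. -/
def LeftAmenableSemigroup (S : Type*) [Semigroup S] [TopologicalSpace S]
    [DiscreteTopology S] : Prop :=
  ∃ m : (S →ᵇ ℝ) →L[ℝ] ℝ, m 1 = 1 ∧ (∀ f : S →ᵇ ℝ, 0 ≤ f → 0 ≤ m f) ∧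
    ∀ (s : S) (f : S →ᵇ ℝ),
      m (f.compContinuous ⟨fun t => s * t, continuous_of_discreteTopology⟩) = m f

open BoundedContinuousFunction

/-!
A mean on `ℓ∞(A)` is pushed forward to a mean on `ℓ∞(B)` along any map `A → B`. Pushing forward
along `s ↦ s s₀` turns a left invariant mean on `ℓ∞(S)` into one on `ℓ∞(S s₀)`, because this map
intertwines left translations. Conversely, restricting to `S s₀` turns a left invariant mean `m`
on `ℓ∞(S s₀)` into a mean on `ℓ∞(S)`; it is invariant under every `s ∈ S` because, by invariance
of `m` under `t₀ = s₀ s₀`, translating by `s` amounts to translating by `s t₀ ∈ S s₀`.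
-/

def IsMean {A : Type*} [TopologicalSpace A] (m : (A →ᵇ ℝ) →L[ℝ] ℝ) : Prop :=
  m 1 = 1 ∧ ∀ f : A →ᵇ ℝ, 0 ≤ f → 0 ≤ m f

lemma IsMean.comp_compContinuousCLM {A B : Type*} [TopologicalSpace A] [TopologicalSpace B]
    {m : (A →ᵇ ℝ) →L[ℝ] ℝ} (hm : IsMean m) (φ : C(A, B)) :
    IsMean (m ∘L compContinuousCLM ℝ ℝ φ) :=
  ⟨by simpa [one_compContinuous] using hm.1, fun f hf => hm.2 _ fun a => hf (φ a)⟩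

namespace LeftAmenableSemigroup

variable {S T : Type*} [Semigroup S] [TopologicalSpace S] [DiscreteTopology S]
  [Semigroup T] [TopologicalSpace T] [DiscreteTopology T]

theorem of_intertwining (hS : LeftAmenableSemigroup S) (φ : S → T) (ψ : T → S)
    (hφ : ∀ t s, φ (ψ t * s) = t * φ s) : LeftAmenableSemigroup T := by
  obtain ⟨m, hm1, hmpos, hminv⟩ := hS
  let Φ : C(S, T) := ⟨φ, continuous_of_discreteTopology⟩
  obtain ⟨h1, hpos⟩ := IsMean.comp_compContinuousCLM ⟨hm1, hmpos⟩ Φ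
  refine ⟨m ∘L compContinuousCLM ℝ ℝ Φ, h1, hpos, fun t g => ?_⟩
  have translate_comp :
      (g.compContinuous ⟨fun u => t * u, continuous_of_discreteTopology⟩).compContinuous Φ =
        (g.compContinuous Φ).compContinuous
          ⟨fun s => ψ t * s, continuous_of_discreteTopology⟩ := by
    ext s
    simp [Φ, hφ]
  simpa [translate_comp] using hminv (ψ t) (g.compContinuous Φ)

theorem of_subsemigroup {U : Subsemigroup S} (hU : LeftAmenableSemigroup U) (t₀ : U)
    (ht₀ : ∀ s, s * (t₀ : S) ∈ U) : LeftAmenableSemigroup S := by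
  obtain ⟨m, hm1, hmpos, hminv⟩ := hU
  let ι : C(U, S) := ⟨Subtype.val, continuous_of_discreteTopology⟩
  obtain ⟨h1, hpos⟩ := IsMean.comp_compContinuousCLM ⟨hm1, hmpos⟩ ι
  refine ⟨m ∘L compContinuousCLM ℝ ℝ ι, h1, hpos, fun s f => ?_⟩
  let t : U := ⟨s * t₀, ht₀ s⟩
  let g := (f.compContinuous ⟨fun u => s * u, continuous_of_discreteTopology⟩).compContinuous ι
  have translate_comp :
      g.compContinuous ⟨fun u => t₀ * u, continuous_of_discreteTopology⟩ =
        (f.compContinuous ι).compContinuous ⟨fun u => t * u, continuous_of_discreteTopology⟩ := by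
    ext u
    simp [g, ι, t, mul_assoc]
  show m g = m (f.compContinuous ι)
  calc m g = m (g.compContinuous ⟨fun u => t₀ * u, continuous_of_discreteTopology⟩) :=
        (hminv t₀ g).symm
    _ = m (f.compContinuous ι) := by rw [translate_comp, hminv t]

end LeftAmenableSemigroup

/-- Let `S` be a semigroup, `s₀ ∈ S`, and let `T` be the subsemigroup `S·s₀`.
Then `S` is left amenable if and only if `S·s₀` is left amenable. -/
theorem leftAmenable_iff_leftAmenable_mul_right (S : Type*) [Semigroup S]
    [TopologicalSpace S] [DiscreteTopology S] (s₀ : S)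
    (T : Subsemigroup S) (hT : (T : Set S) = Set.range (fun s => s * s₀)) :
    LeftAmenableSemigroup S ↔ LeftAmenableSemigroup ↥T := by
  have mul_s₀_mem (s : S) : s * s₀ ∈ T := by
    rw [← SetLike.mem_coe, hT]
    exact ⟨s, rfl⟩
  constructor
  · intro hS
    exact hS.of_intertwining (fun s => ⟨s * s₀, mul_s₀_mem s⟩) Subtype.val
      fun t s => Subtype.ext (mul_assoc _ _ _)
  · intro hT'
    exact hT'.of_subsemigroup ⟨s₀ * s₀, mul_s₀_mem s₀⟩
      fun s => by simpa [mul_assoc] using mul_s₀_mem (s * s₀)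
end

section
/- Let A be a complex Banach algebra with a character φ. Suppose there exist a directed set I, a family (m_i)_{i∈I} of elements of A, and a constant C ≥ 0 such that ‖m_i‖ ≤ C and φ(m_i) = 1 for every i ∈ I, and ‖a m_i − φ(a) m_i‖ → 0 along I for every a ∈ A. Then A is φ-amenable. -/
open Filter

/-- If a complex Banach algebra `A` with character `φ` admits a bounded net `(m_i)` with
`φ(m_i) = 1` and `‖a m_i − φ(a) m_i‖ → 0` for every `a ∈ A`, then `A` is `φ`-amenable. -/
theorem phiAmenable_of_net (A : Type*) [NonUnitalNormedRing A]
    [NormedSpace ℂ A] [IsScalarTower ℂ A A] [SMulCommClass ℂ A A] [CompleteSpace A]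
    (φ : A →L[ℂ] ℂ) (hφmul : ∀ a b : A, φ (a * b) = φ a * φ b) (hφne : φ ≠ 0)
    (I : Type*) [Nonempty I] [Preorder I] [IsDirected I (· ≤ ·)]
    (m : I → A) (C : ℝ) (hC : 0 ≤ C) (hm_bdd : ∀ i, ‖m i‖ ≤ C)
    (hm_one : ∀ i, φ (m i) = 1)
    (hm : ∀ a : A, Tendsto (fun i => ‖a * m i - φ a • m i‖) atTop (nhds 0)) :
    PhiAmenable A φ := by
  classical
  have hNeBot : (atTop : Filter I).NeBot := atTop_neBot
  set U : Ultrafilter I := Ultrafilter.of atTop with hUdef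
  have hUle : (U : Filter I) ≤ atTop := Ultrafilter.of_le atTop
  -- each functional has a limit along the ultrafilter
  have hex : ∀ f : A →L[ℂ] ℂ, ∃ z : ℂ, Tendsto (fun i => f (m i)) U (nhds z) := by
    intro f
    have hcomp : IsCompact (Metric.closedBall (0 : ℂ) (‖f‖ * C)) :=
      isCompact_closedBall _ _
    have hmem : ∀ i, f (m i) ∈ Metric.closedBall (0 : ℂ) (‖f‖ * C) := by
      intro i
      simp only [Metric.mem_closedBall, dist_zero_right]
      calc ‖f (m i)‖ ≤ ‖f‖ * ‖m i‖ := f.le_opNorm _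
        _ ≤ ‖f‖ * C := mul_le_mul_of_nonneg_left (hm_bdd i) (norm_nonneg f)
    obtain ⟨z, _, hle⟩ := hcomp.ultrafilter_le_nhds (U.map fun i => f (m i)) (by
      rw [Ultrafilter.coe_map, le_principal_iff, Filter.mem_map]
      exact Filter.univ_mem' hmem)
    exact ⟨z, by rwa [Ultrafilter.coe_map] at hle⟩
  let lim : (A →L[ℂ] ℂ) → ℂ := fun f => Classical.choose (hex f)
  have hlim : ∀ f : A →L[ℂ] ℂ, Tendsto (fun i => f (m i)) U (nhds (lim f)) :=
    fun f => Classical.choose_spec (hex f)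
  have huniq : ∀ (f : A →L[ℂ] ℂ) (z : ℂ),
      Tendsto (fun i => f (m i)) U (nhds z) → lim f = z :=
    fun f z hz => tendsto_nhds_unique (hlim f) hz
  have hadd : ∀ f g : A →L[ℂ] ℂ, lim (f + g) = lim f + lim g := by
    intro f g
    exact huniq (f + g) _ ((hlim f).add (hlim g))
  have hsmul : ∀ (c : ℂ) (f : A →L[ℂ] ℂ), lim (c • f) = c * lim f := by
    intro c f
    exact huniq (c • f) _ ((hlim f).const_mul c)
  have hbound : ∀ f : A →L[ℂ] ℂ, ‖lim f‖ ≤ C * ‖f‖ := by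
    intro f
    refine le_of_tendsto (hlim f).norm (Eventually.of_forall fun i => ?_)
    calc ‖f (m i)‖ ≤ ‖f‖ * ‖m i‖ := f.le_opNorm _
      _ ≤ ‖f‖ * C := mul_le_mul_of_nonneg_left (hm_bdd i) (norm_nonneg f)
      _ = C * ‖f‖ := mul_comm _ _
  let L : ((A →L[ℂ] ℂ) →ₗ[ℂ] ℂ) :=
    { toFun := lim
      map_add' := hadd
      map_smul' := hsmul }
  let M : ((A →L[ℂ] ℂ) →L[ℂ] ℂ) := L.mkContinuous C hbound
  refine ⟨M, ?_, ?_⟩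
  · have : Tendsto (fun i => φ (m i)) U (nhds 1) := by
      simp only [hm_one]; exact tendsto_const_nhds
    exact huniq φ 1 this
  · intro a f
    have key : Tendsto (fun i => f (a * m i)) U (nhds (φ a * lim f)) := by
      have h1 : Tendsto (fun i => f (a * m i) - φ a * f (m i)) U (nhds 0) := by
        apply squeeze_zero_norm (a := fun i => ‖f‖ * ‖a * m i - φ a • m i‖)
        · intro i
          have : f (a * m i) - φ a * f (m i) = f (a * m i - φ a • m i) := by
            rw [map_sub, map_smul, smul_eq_mul]
          rw [this]
          exact f.le_opNorm _
        · have := (hm a).const_mul ‖f‖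
          simpa using this.mono_left hUle
      have h2 : Tendsto (fun i => φ a * f (m i)) U (nhds (φ a * lim f)) :=
        (hlim f).const_mul (φ a)
      have := h1.add h2
      simpa using this
    have : lim (f.comp (ContinuousLinearMap.mul ℂ A a)) = φ a * lim f := by
      apply huniq
      simpa using key
    exact this
end

section
/- Let E be a Hausdorff topological vector space over ℂ, let H be a closed linear subspace of E such that the quotient space E/H has finite dimension n ≥ 1, and let X be a subset of E such that H ∩ X is compact. Then for every n-dimensional linear subspace L of E with L ⊆ X, the quotient map q : E → E/H restricts to a linear bijection from L onto E/H. -/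
/-!
The kernel of `q` restricted to `L` is `L ⊓ H`, which lies in the compact set `H ∩ X`.
A compact set in a Hausdorff vector space over a nontrivially normed complete field contains
no nonzero subspace, since `c ↦ c • x` embeds the noncompact scalar field as a closed set.
So `q|L` is injective, and an injective map between spaces of the same finite dimension
is bijective.
-/

namespace Submodule

theorem eq_bot_of_subset_isCompact {𝕜 E : Type*} [NontriviallyNormedField 𝕜] [CompleteSpace 𝕜]
    [AddCommGroup E] [Module 𝕜 E] [TopologicalSpace E] [IsTopologicalAddGroup E]
    [ContinuousSMul 𝕜 E] [T2Space E] {S : Submodule 𝕜 E} {K : Set E} (hK : IsCompact K)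
    (hSK : (S : Set E) ⊆ K) : S = ⊥ := by
  refine S.eq_bot_iff.2 fun x hx => ?_
  by_contra hx0
  have hpre : (fun c : 𝕜 => c • x) ⁻¹' K = Set.univ :=
    Set.eq_univ_of_forall fun c => hSK (S.smul_mem c hx)
  exact noncompact_univ 𝕜 (hpre ▸ (isClosedEmbedding_smul_left hx0).isCompact_preimage hK)

theorem bijective_mkQ_comp_subtype_of_disjoint {K V : Type*} [DivisionRing K] [AddCommGroup V]
    [Module K V] {L H : Submodule K V} [FiniteDimensional K L] [FiniteDimensional K (V ⧸ H)]
    (hLH : Disjoint L H) (hrank : Module.finrank K L = Module.finrank K (V ⧸ H)) :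
    Function.Bijective (H.mkQ.comp L.subtype) := by
  have hinj : Function.Injective (H.mkQ.comp L.subtype) := by
    rw [← LinearMap.ker_eq_bot, LinearMap.ker_comp, ker_mkQ, ← disjoint_iff_comap_eq_bot]
    exact hLH
  exact ⟨hinj, (LinearMap.injective_iff_surjective_of_finrank_eq_finrank hrank).1 hinj⟩

end Submodule

theorem quotient_map_bijective_on_fin_dim_subspace_general (E : Type*) [AddCommGroup E]
    [Module ℂ E] [TopologicalSpace E] [IsTopologicalAddGroup E] [ContinuousSMul ℂ E]
    [T2Space E] (n : ℕ)
    (H : Submodule ℂ E)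
    [FiniteDimensional ℂ (E ⧸ H)] (hHcodim : Module.finrank ℂ (E ⧸ H) = n)
    (X : Set E) (hHX : IsCompact ((H : Set E) ∩ X))
    (L : Submodule ℂ E) [FiniteDimensional ℂ L] (hLdim : Module.finrank ℂ L = n)
    (hLX : (L : Set E) ⊆ X) :
    Function.Bijective (H.mkQ.comp L.subtype) := by
  have hLH : Disjoint L H :=
    disjoint_iff.2 <| Submodule.eq_bot_of_subset_isCompact hHX fun _ hx => ⟨hx.2, hLX hx.1⟩
  exact Submodule.bijective_mkQ_comp_subtype_of_disjoint hLH (hLdim.trans hHcodim.symm)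

/-- Let `E` be a Hausdorff topological vector space over `ℂ`, `H` a closed subspace with
`dim (E/H) = n ≥ 1`, and `X ⊆ E` a subset with `H ∩ X` compact.  Then for every
`n`-dimensional subspace `L ⊆ X`, the quotient map `q : E → E/H` restricts to a linear
bijection from `L` onto `E/H`. -/
theorem quotient_map_bijective_on_fin_dim_subspace (E : Type*) [AddCommGroup E]
    [Module ℂ E] [TopologicalSpace E] [IsTopologicalAddGroup E] [ContinuousSMul ℂ E]
    [T2Space E] (n : ℕ) (hn : 1 ≤ n)
    (H : Submodule ℂ E) (hHclosed : IsClosed (H : Set E))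
    [FiniteDimensional ℂ (E ⧸ H)] (hHcodim : Module.finrank ℂ (E ⧸ H) = n)
    (X : Set E) (hHX : IsCompact ((H : Set E) ∩ X))
    (L : Submodule ℂ E) [FiniteDimensional ℂ L] (hLdim : Module.finrank ℂ L = n)
    (hLX : (L : Set E) ⊆ X) :
    Function.Bijective (H.mkQ.comp L.subtype) :=
  quotient_map_bijective_on_fin_dim_subspace_general E n H hHcodim X hHX L hLdim hLX
end
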